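/- (Entry of the Gr(3,7) twist table: T*(X^{123567}) = Δ₁₂₇Δ₂₃₄·X^{134567}.) For all vectors v₁,…,v₇ ∈ ℝ³, set w_i := v_{i+1}×v_{i+2} with indices taken modulo 7 in {1,…,7}, and write Δ_{abc} := det(v_a,v_b,v_c). Then det(w₁×w₂, w₃×w₅, w₆×w₇) = Δ₁₂₇·Δ₂₃₄·det(v₁×v₃, v₄×v₅, v₆×v₇). -/

import Mathlib

/-!
Both `w₁ × w₂` and `w₆ × w₇` are cross products of normals of two planes sharing a line, so
`(a × b) × (b × c) = det(a, b, c) b` turns them into `Δ₂₃₄ v₃` and `Δ₁₂₇ v₁`. What remains is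
`det(v₃, X × Y, v₁)` with `X = v₄ × v₅`, `Y = v₆ × v₇`, and cycling the triple product gives
`(v₁ × v₃) · (X × Y) = det(v₁ × v₃, X, Y)`.
-/

/-- Determinant of the 3×3 real matrix with columns `a`, `b`, `c`. -/
noncomputable def det3 (a b c : Fin 3 → ℝ) : ℝ :=
  (Matrix.of ![a, b, c]).transpose.det

/-- The standard cross product on `ℝ³`. -/
def cross (a b : Fin 3 → ℝ) : Fin 3 → ℝ := crossProduct a b

open Matrix

theorem det3_eq_dotProduct_cross (a b c : Fin 3 → ℝ) : det3 a b c = a ⬝ᵥ cross b c := by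
  rw [det3, det_transpose, cross, triple_product_eq_det]
  rfl

theorem det3_rotate (a b c : Fin 3 → ℝ) : det3 a b c = det3 b c a := by
  rw [det3_eq_dotProduct_cross, det3_eq_dotProduct_cross, cross, cross,
    triple_product_permutation]

theorem det3_smul_left_smul_right (s t : ℝ) (a b c : Fin 3 → ℝ) :
    det3 (s • a) b (t • c) = s * t * det3 a b c := by
  simp only [det3_eq_dotProduct_cross, cross, map_smul, smul_dotProduct, dotProduct_smul,
    smul_eq_mul]
  ring

theorem det3_cross_middle (a b c d : Fin 3 → ℝ) :
    det3 a (cross b c) d = det3 (cross d a) b c := by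
  rw [det3_eq_dotProduct_cross, det3_eq_dotProduct_cross]
  unfold cross
  rw [triple_product_permutation, dotProduct_comm]

theorem cross_cross_cross_of_common (a b c : Fin 3 → ℝ) :
    cross (cross a b) (cross b c) = det3 a b c • b := by
  rw [cross, cross, cross, cross_cross_eq_smul_sub_smul', dot_cross_self, zero_smul, sub_zero,
    dotProduct_comm, triple_product_permutation, det3_eq_dotProduct_cross, cross]

theorem twist_X123567_general (v₁ v₂ v₃ v₄ v₅ v₆ v₇ w₁ w₂ w₃ w₅ w₆ w₇ : Fin 3 → ℝ)
    (hw₁ : w₁ = cross v₂ v₃) (hw₂ : w₂ = cross v₃ v₄) (hw₃ : w₃ = cross v₄ v₅)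
    (hw₅ : w₅ = cross v₆ v₇) (hw₆ : w₆ = cross v₇ v₁)
    (hw₇ : w₇ = cross v₁ v₂) :
    det3 (cross w₁ w₂) (cross w₃ w₅) (cross w₆ w₇)
      = det3 v₁ v₂ v₇ * det3 v₂ v₃ v₄
          * det3 (cross v₁ v₃) (cross v₄ v₅) (cross v₆ v₇) := by
  subst hw₁ hw₂ hw₃ hw₅ hw₆ hw₇
  rw [cross_cross_cross_of_common, cross_cross_cross_of_common, det3_smul_left_smul_right,
    det3_cross_middle, det3_rotate v₇]
  ring

/-- Gr(3,7) twist table entry: `T*(X^{123567}) = Δ₁₂₇Δ₂₃₄ · X^{134567}`. -/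
theorem twist_X123567 (v₁ v₂ v₃ v₄ v₅ v₆ v₇ w₁ w₂ w₃ w₄ w₅ w₆ w₇ : Fin 3 → ℝ)
    (hw₁ : w₁ = cross v₂ v₃) (hw₂ : w₂ = cross v₃ v₄) (hw₃ : w₃ = cross v₄ v₅)
    (hw₄ : w₄ = cross v₅ v₆) (hw₅ : w₅ = cross v₆ v₇) (hw₆ : w₆ = cross v₇ v₁)
    (hw₇ : w₇ = cross v₁ v₂) :
    det3 (cross w₁ w₂) (cross w₃ w₅) (cross w₆ w₇)
      = det3 v₁ v₂ v₇ * det3 v₂ v₃ v₄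
          * det3 (cross v₁ v₃) (cross v₄ v₅) (cross v₆ v₇) :=
  twist_X123567_general v₁ v₂ v₃ v₄ v₅ v₆ v₇ w₁ w₂ w₃ w₅ w₆ w₇ hw₁ hw₂ hw₃ hw₅ hw₆ hw₇
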